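/- Tensor trace minimization (Theorem 3.4): let A ∈ ℝ^{m×m×p} be f-symmetric and f-positive-semidefinite. Then min over V ∈ ℝ^{m×d×p} with V^T * V = I of Trace_f(V^T * A * V) equals (1/p) Σ_{i=1}^p Σ_{j=1}^d λ̃_j(Â_i), where λ̃_1(Â_i) ≤ … ≤ λ̃_m(Â_i) are the eigenvalues of the Fourier-domain frontal slice Â_i in increasing order. -/

import Mathlib

/-!
Under the DFT along the third mode the t-product becomes slice-wise matrix multiplication, the
t-transpose becomes the conjugate transpose and `Trace_f` is the average of the slice traces.
So `Vᵀ * V = I` says that every slice `V̂ₖ` is an isometry, and the objective is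
`(1/p) ∑ₖ tr (V̂ₖᴴ Âₖ V̂ₖ)`. Each summand is at least the sum of the `d` smallest eigenvalues of
`Âₖ = Uₖ Dₖ Uₖᴴ` (Ky Fan): the rows of `Y = Uₖᴴ V̂ₖ` have squared norms in `[0, 1]` summing to
`d`, and `tr (Yᴴ Dₖ Y)` is the corresponding weighted sum of eigenvalues.

The first `d` eigenvectors attain the bound, but `V` has to be real, i.e. `V̂₋ₖ = conj V̂ₖ`.
We pick the minimisers on one frequency of each pair `{k, -k}` and conjugate them on the
other; at the self-conjugate frequencies `Âₖ` is real symmetric and we use a real orthonormal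
eigenbasis. The sum of the `d` smallest eigenvalues does not depend on the diagonalisation used
to list them, because by the Ky Fan bound it is the minimum in either case.
-/

open Complex Matrix BigOperators
open scoped Kronecker ComplexOrder

/-- primitive root ω = exp(-2πi/p) used in the DFT. -/
noncomputable def tOmega (p : ℕ) : ℂ := Complex.exp (-(2 * Real.pi * Complex.I) / p)

/-- unitary DFT matrix of order ℓ, (F)_{k,j} = ω^{k j}/√ℓ (0-based indices). -/
noncomputable def dftMatrix (ℓ : ℕ) : Matrix (Fin ℓ) (Fin ℓ) ℂ :=
  Matrix.of fun k j => (tOmega ℓ) ^ ((k : ℕ) * (j : ℕ)) / (Real.sqrt ℓ : ℂ)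

/-- unnormalized mode-3 DFT of a real third-order tensor given by its frontal slices. -/
noncomputable def dft3 {m n p : ℕ} (A : Fin p → Matrix (Fin m) (Fin n) ℝ) :
    Fin p → Matrix (Fin m) (Fin n) ℂ :=
  fun k => ∑ l : Fin p, (tOmega p) ^ ((k : ℕ) * (l : ℕ)) • (A l).map (fun x => (x : ℂ))

/-- t-product of third-order tensors (circular convolution of frontal slices),
    equivalently MatVec⁻¹[Bcirc(A)·MatVec(B)]. -/
def tProd {m l n p : ℕ} (A : Fin p → Matrix (Fin m) (Fin l) ℝ)
    (B : Fin p → Matrix (Fin l) (Fin n) ℝ) : Fin p → Matrix (Fin m) (Fin n) ℝ :=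
  fun k => ∑ j : Fin p, A (k - j) * B j

/-- t-transpose: transpose each frontal slice and reverse the order of slices 2,…,p. -/
def tTrans {m n p : ℕ} (A : Fin p → Matrix (Fin m) (Fin n) ℝ) :
    Fin p → Matrix (Fin n) (Fin m) ℝ :=
  fun k => (A (-k))ᵀ

/-- identity tensor: first frontal slice is I, the others vanish. -/
def tId (m p : ℕ) : Fin p → Matrix (Fin m) (Fin m) ℝ :=
  fun k => if (k : ℕ) = 0 then 1 else 0

/-- f-trace: average of the traces of the Fourier-domain frontal slices. -/
noncomputable def tTraceF {m p : ℕ} (A : Fin p → Matrix (Fin m) (Fin m) ℝ) : ℂ :=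
  (1 / (p : ℂ)) * ∑ i : Fin p, (dft3 A i).trace

/-- squared Frobenius norm of a tensor. -/
def frob2 {m n p : ℕ} (A : Fin p → Matrix (Fin m) (Fin n) ℝ) : ℝ :=
  ∑ k : Fin p, ∑ r : Fin m, ∑ c : Fin n, (A k r c) ^ 2

/-- Frobenius inner product of tensors. -/
def finner {m n p : ℕ} (A B : Fin p → Matrix (Fin m) (Fin n) ℝ) : ℝ :=
  ∑ k : Fin p, ∑ r : Fin m, ∑ c : Fin n, A k r c * B k r c

/-- block circulant matrix of a tensor (complex-valued entries). -/
noncomputable def bcirc {m n p : ℕ} (A : Fin p → Matrix (Fin m) (Fin n) ℝ) :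
    Matrix (Fin p × Fin m) (Fin p × Fin n) ℂ :=
  Matrix.of fun x y => (A (x.1 - y.1) x.2 y.2 : ℂ)

section RootsOfUnity

variable {p : ℕ}

lemma isPrimitiveRoot_tOmega (hp : p ≠ 0) : IsPrimitiveRoot (tOmega p) p := by
  rw [tOmega, neg_div, Complex.exp_neg]
  exact (Complex.isPrimitiveRoot_exp p hp).inv

lemma tOmega_pow_mul_add [NeZero p] (k a b : Fin p) :
    tOmega p ^ ((k : ℕ) * ((a + b : Fin p) : ℕ)) =
      tOmega p ^ ((k : ℕ) * a) * tOmega p ^ ((k : ℕ) * b) := by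
  have hω := isPrimitiveRoot_tOmega (NeZero.ne p)
  rw [← pow_add, (hω.isOfFinOrder (NeZero.ne p)).pow_eq_pow_iff_modEq, ← hω.eq_orderOf, Fin.val_add,
    ← Nat.mul_add]
  exact (Nat.mod_modEq _ _).mul_left _

lemma star_tOmega_pow_mul_eq_neg_right [NeZero p] (k a : Fin p) :
    star (tOmega p ^ ((k : ℕ) * a)) = tOmega p ^ ((k : ℕ) * (-a : Fin p)) := by
  have hω := isPrimitiveRoot_tOmega (NeZero.ne p)
  have hnorm : ‖tOmega p ^ ((k : ℕ) * a)‖ = 1 := by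
    rw [norm_pow, hω.norm'_eq_one (NeZero.ne p), one_pow]
  rw [RCLike.star_def, ← Complex.inv_eq_conj hnorm, inv_eq_iff_eq_inv]
  refine (eq_inv_of_mul_eq_one_left ?_)
  rw [← tOmega_pow_mul_add, add_neg_cancel, Fin.val_zero, mul_zero, pow_zero]

lemma star_tOmega_pow_mul_eq_neg_left [NeZero p] (k a : Fin p) :
    star (tOmega p ^ ((k : ℕ) * a)) = tOmega p ^ (((-k : Fin p) : ℕ) * a) := by
  rw [mul_comm, star_tOmega_pow_mul_eq_neg_right, mul_comm]

lemma sum_tOmega_pow_mul [NeZero p] (a : Fin p) :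
    ∑ l : Fin p, tOmega p ^ ((l : ℕ) * a) = if a = 0 then (p : ℂ) else 0 := by
  have hω := isPrimitiveRoot_tOmega (NeZero.ne p)
  simp_rw [mul_comm _ (a : ℕ), pow_mul]
  rw [Fin.sum_univ_eq_sum_range (fun l => (tOmega p ^ (a : ℕ)) ^ l)]
  split_ifs with ha
  · simp [ha]
  · have hne : tOmega p ^ (a : ℕ) ≠ 1 := fun h =>
      ha (Fin.ext (Nat.eq_zero_of_dvd_of_lt (hω.dvd_of_pow_eq_one _ h) a.is_lt))
    rw [geom_sum_eq hne, ← pow_mul, mul_comm, pow_mul, hω.pow_eq_one, one_pow, sub_self,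
      zero_div]

lemma sum_tOmega_pow_mul_mul_star [NeZero p] (a b : Fin p) :
    ∑ l : Fin p, tOmega p ^ ((l : ℕ) * a) * star (tOmega p ^ ((l : ℕ) * b)) =
      if a = b then (p : ℂ) else 0 := by
  simp_rw [star_tOmega_pow_mul_eq_neg_right, ← tOmega_pow_mul_add, ← sub_eq_add_neg,
    sum_tOmega_pow_mul, sub_eq_zero]

end RootsOfUnity

section Inversion

variable {p : ℕ} {E : Type*} [AddCommGroup E] [Module ℂ E]

lemma tOmega_dft_idft [NeZero p] (g : Fin p → E) (k : Fin p) :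
    ∑ l : Fin p, tOmega p ^ ((k : ℕ) * l) •
      ((p : ℂ)⁻¹ • ∑ j : Fin p, star (tOmega p ^ ((j : ℕ) * l)) • g j) = g k := by
  have hp : (p : ℂ) ≠ 0 := Nat.cast_ne_zero.mpr (NeZero.ne p)
  calc _ = (p : ℂ)⁻¹ • ∑ j : Fin p,
        (∑ l : Fin p, tOmega p ^ ((l : ℕ) * k) * star (tOmega p ^ ((l : ℕ) * j))) • g j := by
        simp only [Finset.smul_sum, Finset.sum_smul, smul_smul]
        rw [Finset.sum_comm]
        refine Finset.sum_congr rfl fun j _ => Finset.sum_congr rfl fun l _ => ?_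
        rw [mul_comm (l : ℕ) k, mul_comm (l : ℕ) j, mul_left_comm]
    _ = g k := by
        simp_rw [sum_tOmega_pow_mul_mul_star, ite_smul, zero_smul, Finset.sum_ite_eq,
          Finset.mem_univ, if_true, inv_smul_smul₀ hp]

lemma tOmega_idft_dft [NeZero p] (f : Fin p → E) (l : Fin p) :
    (p : ℂ)⁻¹ • ∑ k : Fin p, star (tOmega p ^ ((k : ℕ) * l)) •
      ∑ j : Fin p, tOmega p ^ ((k : ℕ) * j) • f j = f l := by
  have hp : (p : ℂ) ≠ 0 := Nat.cast_ne_zero.mpr (NeZero.ne p)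
  calc _ = (p : ℂ)⁻¹ • ∑ j : Fin p,
        (∑ k : Fin p, tOmega p ^ ((k : ℕ) * j) * star (tOmega p ^ ((k : ℕ) * l))) • f j := by
        simp only [Finset.smul_sum, Finset.sum_smul, smul_smul]
        rw [Finset.sum_comm]
        refine Finset.sum_congr rfl fun j _ => Finset.sum_congr rfl fun k _ => ?_
        rw [mul_comm (star _)]
    _ = f l := by
        simp_rw [sum_tOmega_pow_mul_mul_star, ite_smul, zero_smul, Finset.sum_ite_eq',
          Finset.mem_univ, if_true, inv_smul_smul₀ hp]

end Inversion

section Fourier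

variable {m n q p : ℕ}

lemma dft3_tProd (A : Fin p → Matrix (Fin m) (Fin q) ℝ) (B : Fin p → Matrix (Fin q) (Fin n) ℝ)
    (k : Fin p) : dft3 (tProd A B) k = dft3 A k * dft3 B k := by
  have : NeZero p := NeZero.of_pos k.pos
  have hmap (l : Fin p) : (tProd A B l).map (fun x => (x : ℂ)) =
      ∑ j, (A (l - j)).map (fun x => (x : ℂ)) * (B j).map (fun x => (x : ℂ)) := by
    ext r c
    simp [tProd, Matrix.mul_apply, Matrix.sum_apply]
  calc dft3 (tProd A B) k
      = ∑ j, ∑ s, tOmega p ^ ((k : ℕ) * ((s + j : Fin p) : ℕ)) •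
          ((A s).map (fun x => (x : ℂ)) * (B j).map (fun x => (x : ℂ))) := by
        simp_rw [dft3, hmap, Finset.smul_sum]
        rw [Finset.sum_comm]
        refine Finset.sum_congr rfl fun j _ => ?_
        exact Fintype.sum_equiv (Equiv.subRight j) _ _ fun l => by simp
    _ = dft3 A k * dft3 B k := by
        simp only [tOmega_pow_mul_add, dft3]
        simp_rw [Matrix.sum_mul, Matrix.mul_sum, Matrix.smul_mul, Matrix.mul_smul, smul_smul]
        exact Finset.sum_comm

lemma dft3_tTrans (V : Fin p → Matrix (Fin m) (Fin n) ℝ) (k : Fin p) :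
    dft3 (tTrans V) k = (dft3 V k)ᴴ := by
  have : NeZero p := NeZero.of_pos k.pos
  ext r c
  simp only [dft3, tTrans, Matrix.sum_apply, Matrix.smul_apply, Matrix.map_apply,
    Matrix.conjTranspose_apply, Matrix.transpose_apply, smul_eq_mul, star_sum, star_mul',
    star_tOmega_pow_mul_eq_neg_right]
  exact Fintype.sum_equiv (Equiv.neg _) _ _ fun l => by simp

lemma dft3_tId (d : ℕ) (k : Fin p) : dft3 (tId d p) k = 1 := by
  have : NeZero p := NeZero.of_pos k.pos
  rw [dft3, Finset.sum_eq_single 0 (fun l _ hl => by simp [tId, hl]) (by simp)]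
  simp [tId, Matrix.map_one]

lemma dft3_neg (A : Fin p → Matrix (Fin m) (Fin n) ℝ) (k : Fin p) :
    dft3 A (-k) = (dft3 A k).map (starRingEnd ℂ) := by
  have : NeZero p := NeZero.of_pos k.pos
  ext r c
  simp only [dft3, Matrix.sum_apply, Matrix.smul_apply, Matrix.map_apply, smul_eq_mul, map_sum,
    map_mul, starRingEnd_apply, star_tOmega_pow_mul_eq_neg_left]
  simp

lemma dft3_injective :
    Function.Injective (dft3 : (Fin p → Matrix (Fin m) (Fin n) ℝ) → _) := by
  intro X Z h
  funext l
  have : NeZero p := NeZero.of_pos l.pos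
  have inversion (Y : Fin p → Matrix (Fin m) (Fin n) ℝ) : (Y l).map (fun x => (x : ℂ)) =
      (p : ℂ)⁻¹ • ∑ k : Fin p, star (tOmega p ^ ((k : ℕ) * l)) • dft3 Y k :=
    (tOmega_idft_dft (fun l => (Y l).map _) l).symm
  have hXZ := inversion X
  rw [h, ← inversion Z] at hXZ
  exact Matrix.map_injective Complex.ofReal_injective hXZ

lemma exists_dft3_eq_of_neg_eq_conj (W : Fin p → Matrix (Fin m) (Fin n) ℂ)
    (hW : ∀ k, W (-k) = (W k).map (starRingEnd ℂ)) : ∃ V, ∀ k, dft3 V k = W k := by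
  set g : Fin p → Matrix (Fin m) (Fin n) ℂ :=
    fun l => (p : ℂ)⁻¹ • ∑ j : Fin p, star (tOmega p ^ ((j : ℕ) * l)) • W j
  have hg_real (l : Fin p) : (g l).map (fun x => ((x.re : ℝ) : ℂ)) = g l := by
    have : NeZero p := NeZero.of_pos l.pos
    ext r c
    refine Complex.conj_eq_iff_re.mp ?_
    simp only [g, Matrix.smul_apply, Matrix.sum_apply, smul_eq_mul, map_mul, map_sum, map_inv₀,
      map_natCast, starRingEnd_apply, star_star]
    congr 1
    refine Fintype.sum_equiv (Equiv.neg _) _ _ fun j => ?_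
    rw [Equiv.neg_apply, star_tOmega_pow_mul_eq_neg_left, neg_neg, hW, Matrix.map_apply,
      starRingEnd_apply]
  refine ⟨fun l => (g l).map Complex.re, fun k => ?_⟩
  have : NeZero p := NeZero.of_pos k.pos
  calc dft3 (fun l => (g l).map Complex.re) k = ∑ l : Fin p, tOmega p ^ ((k : ℕ) * l) • g l :=
        Finset.sum_congr rfl fun l _ => by rw [Matrix.map_map]; exact congrArg _ (hg_real l)
    _ = W k := tOmega_dft_idft W k

end Fourier

lemma sum_le_sum_mul_of_threshold {ι : Type*} [Fintype ι] {μ t : ι → ℝ} {s : Finset ι} {c : ℝ}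
    (hlow : ∀ i ∈ s, μ i ≤ c) (hhigh : ∀ i ∉ s, c ≤ μ i) (ht0 : ∀ i, 0 ≤ t i)
    (ht1 : ∀ i, t i ≤ 1) (hsum : ∑ i, t i = s.card) :
    ∑ i ∈ s, μ i ≤ ∑ i, μ i * t i := by
  classical
  have hterm (i : ι) : 0 ≤ (μ i - c) * (t i - if i ∈ s then 1 else 0) := by
    split_ifs with hi
    · exact mul_nonneg_of_nonpos_of_nonpos (sub_nonpos.2 (hlow i hi)) (sub_nonpos.2 (ht1 i))
    · simpa using mul_nonneg (sub_nonneg.2 (hhigh i hi)) (ht0 i)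
  have hexpand : ∑ i, (μ i - c) * (t i - if i ∈ s then 1 else 0) =
      ∑ i, μ i * t i - ∑ i ∈ s, μ i := by
    simp only [mul_sub, sub_mul, Finset.sum_sub_distrib, mul_ite, mul_one, mul_zero,
      Finset.sum_ite_mem, Finset.univ_inter, ← Finset.mul_sum, hsum, Finset.sum_const,
      nsmul_eq_mul]
    ring
  linarith [Finset.sum_nonneg fun i (_ : i ∈ Finset.univ) => hterm i]

lemma conjTranspose_mul_self_apply_self {ι κ : Type*} [Fintype ι] (Y : Matrix ι κ ℂ) (c : κ) :
    (Yᴴ * Y) c c = ((∑ i, normSq (Y i c) : ℝ) : ℂ) := by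
  simp [Matrix.mul_apply, normSq_eq_conj_mul_self]

lemma mul_conjTranspose_self_apply_self {ι κ : Type*} [Fintype κ] (Y : Matrix ι κ ℂ) (i : ι) :
    (Y * Yᴴ) i i = ((∑ c, normSq (Y i c) : ℝ) : ℂ) := by
  simp [Matrix.mul_apply, Complex.mul_conj]

lemma sum_normSq_row_le_one {ι κ : Type*} [Fintype ι] [Fintype κ] [DecidableEq κ]
    {Y : Matrix ι κ ℂ} (hY : Yᴴ * Y = 1) (i : ι) : ∑ c, normSq (Y i c) ≤ 1 := by
  -- `P = Y Yᴴ` is an orthogonal projection, so `Pᵢᵢ = ∑ₖ |Pᵢₖ|² ≥ Pᵢᵢ²`.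
  have hP : (Y * Yᴴ) * (Y * Yᴴ) = Y * Yᴴ := by
    rw [Matrix.mul_assoc, ← Matrix.mul_assoc Yᴴ, hY, Matrix.one_mul]
  have hPH : (Y * Yᴴ)ᴴ = Y * Yᴴ := by
    rw [Matrix.conjTranspose_mul, Matrix.conjTranspose_conjTranspose]
  have hdiag : ∑ c, normSq (Y i c) = ∑ k, normSq ((Y * Yᴴ) i k) := by
    refine Complex.ofReal_injective ?_
    rw [← mul_conjTranspose_self_apply_self]
    conv_lhs => rw [← hP]
    rw [Matrix.mul_apply]
    push_cast
    refine Finset.sum_congr rfl fun k _ => ?_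
    rw [← Complex.mul_conj]
    congr 1
    conv_lhs => rw [← hPH]
    rfl
  have hle : normSq ((Y * Yᴴ) i i) ≤ ∑ k, normSq ((Y * Yᴴ) i k) :=
    Finset.single_le_sum (fun k _ => normSq_nonneg _) (Finset.mem_univ i)
  rw [mul_conjTranspose_self_apply_self, normSq_ofReal, ← hdiag] at hle
  nlinarith [Finset.sum_nonneg fun c (_ : c ∈ Finset.univ) => normSq_nonneg (Y i c)]

lemma sum_sum_normSq_eq_card {ι κ : Type*} [Fintype ι] [Fintype κ] [DecidableEq κ]
    {Y : Matrix ι κ ℂ} (hY : Yᴴ * Y = 1) :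
    ∑ i, ∑ c, normSq (Y i c) = Fintype.card κ := by
  have h := congrArg Matrix.trace hY
  rw [Matrix.trace_one, Matrix.trace] at h
  simp only [Matrix.diag_apply, conjTranspose_mul_self_apply_self] at h
  rw [Finset.sum_comm]
  exact_mod_cast h

lemma trace_conjTranspose_mul_diagonal_mul {ι κ : Type*} [Fintype ι] [Fintype κ] [DecidableEq ι]
    (Y : Matrix ι κ ℂ) (μ : ι → ℝ) :
    (Yᴴ * diagonal (fun i => (μ i : ℂ)) * Y).trace =
      ((∑ i, μ i * ∑ c, normSq (Y i c) : ℝ) : ℂ) := by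
  simp only [Matrix.trace, Matrix.diag_apply, Matrix.mul_apply, Matrix.conjTranspose_apply,
    RCLike.star_def, Matrix.diagonal_apply, mul_ite, mul_zero, Finset.sum_ite_eq',
    Finset.mem_univ, if_true, Finset.mul_sum, Complex.ofReal_sum, Complex.ofReal_mul,
    normSq_eq_conj_mul_self]
  rw [Finset.sum_comm]
  exact Finset.sum_congr rfl fun i _ => Finset.sum_congr rfl fun c _ => by ring

section Submatrix

variable {ι ι' κ α : Type*}

lemma conjTranspose_submatrix_mul_mul_submatrix [Fintype ι] [NonUnitalNonAssocSemiring α]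
    [Star α] (U : Matrix ι ι' α) (M : Matrix ι ι α) (e : κ → ι') :
    (U.submatrix id e)ᴴ * M * U.submatrix id e = (Uᴴ * M * U).submatrix e e := by
  ext a b
  rfl

variable [Fintype ι] [DecidableEq ι] [DecidableEq κ]

lemma conjTranspose_submatrix_mul_submatrix [Semiring α] [StarRing α] {U : Matrix ι ι α}
    (hU : Uᴴ * U = 1) {e : κ → ι} (he : Function.Injective e) :
    (U.submatrix id e)ᴴ * U.submatrix id e = 1 := by
  simpa [hU, Matrix.submatrix_one _ he] using conjTranspose_submatrix_mul_mul_submatrix U 1 e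

lemma trace_conjTranspose_submatrix_mul_mul_submatrix_diagonal [Fintype κ] [CommSemiring α]
    [StarRing α] {U : Matrix ι ι α} (hU : Uᴴ * U = 1) {e : κ → ι} (he : Function.Injective e)
    (v : ι → α) :
    ((U.submatrix id e)ᴴ * (U * diagonal v * Uᴴ) * U.submatrix id e).trace =
      ∑ k, v (e k) := by
  have hUDU : Uᴴ * (U * diagonal v * Uᴴ) * U = diagonal v := by
    simp only [← Matrix.mul_assoc, hU, Matrix.one_mul]
    rw [Matrix.mul_assoc, hU, Matrix.mul_one]
  rw [conjTranspose_submatrix_mul_mul_submatrix, hUDU, Matrix.submatrix_diagonal _ _ he,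
    Matrix.trace_diagonal]
  rfl

end Submatrix

section KyFan

variable {m d : ℕ}

lemma sum_castLE_le_trace_conjTranspose_mul_diagonal_mul (hd : d ≤ m) {μ : Fin m → ℝ}
    (hμ : Monotone μ) {Y : Matrix (Fin m) (Fin d) ℂ} (hY : Yᴴ * Y = 1) :
    ((∑ j : Fin d, μ (Fin.castLE hd j) : ℝ) : ℂ) ≤
      (Yᴴ * diagonal (fun i => (μ i : ℂ)) * Y).trace := by
  rw [trace_conjTranspose_mul_diagonal_mul, Complex.real_le_real]
  rcases Nat.eq_zero_or_pos d with rfl | hd0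
  · simp
  have hmap : ∑ j : Fin d, μ (Fin.castLE hd j) = ∑ i ∈ Finset.univ.map (Fin.castLEEmb hd), μ i := by
    rw [Finset.sum_map]
    rfl
  rw [hmap]
  refine sum_le_sum_mul_of_threshold (c := μ ⟨d - 1, by omega⟩) ?_ ?_
    (fun i => Finset.sum_nonneg fun c _ => normSq_nonneg _) (sum_normSq_row_le_one hY) ?_
  · simp only [Finset.mem_map, Finset.mem_univ, true_and, Fin.castLEEmb_apply]
    rintro _ ⟨j, rfl⟩
    exact hμ (Fin.le_def.mpr (show (j : ℕ) ≤ d - 1 by omega))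
  · intro i hi
    refine hμ (Fin.mk_le_mk.mpr ?_)
    by_contra hlt
    exact hi (Finset.mem_map.mpr ⟨⟨i, by omega⟩, Finset.mem_univ _, Fin.ext rfl⟩)
  · rw [sum_sum_normSq_eq_card hY, Finset.card_map, Finset.card_univ]

lemma sum_castLE_le_trace_of_unitary (hd : d ≤ m) {μ : Fin m → ℝ} (hμ : Monotone μ)
    {U : Matrix (Fin m) (Fin m) ℂ} (hU : Uᴴ * U = 1) {W : Matrix (Fin m) (Fin d) ℂ}
    (hW : Wᴴ * W = 1) :
    ((∑ j : Fin d, μ (Fin.castLE hd j) : ℝ) : ℂ) ≤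
      (Wᴴ * (U * diagonal (fun i => (μ i : ℂ)) * Uᴴ) * W).trace := by
  have hY : (Uᴴ * W)ᴴ * (Uᴴ * W) = 1 := by
    rw [Matrix.conjTranspose_mul, Matrix.conjTranspose_conjTranspose, Matrix.mul_assoc,
      ← Matrix.mul_assoc U, mul_eq_one_comm.mp hU, Matrix.one_mul, hW]
  convert sum_castLE_le_trace_conjTranspose_mul_diagonal_mul hd hμ hY using 2
  simp only [Matrix.conjTranspose_mul, Matrix.conjTranspose_conjTranspose, Matrix.mul_assoc]

lemma sum_castLE_eq_of_unitary_diagonal_eq (hd : d ≤ m) {U V : Matrix (Fin m) (Fin m) ℂ}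
    (hU : Uᴴ * U = 1) (hV : Vᴴ * V = 1) {μ ν : Fin m → ℝ} (hμ : Monotone μ) (hν : Monotone ν)
    (h : U * diagonal (fun i => (μ i : ℂ)) * Uᴴ =
      V * diagonal (fun i => (ν i : ℂ)) * Vᴴ) :
    ∑ j : Fin d, μ (Fin.castLE hd j) = ∑ j : Fin d, ν (Fin.castLE hd j) := by
  have key {U V : Matrix (Fin m) (Fin m) ℂ} (hU : Uᴴ * U = 1) (hV : Vᴴ * V = 1)
      {μ ν : Fin m → ℝ} (hμ : Monotone μ) (h : U * diagonal (fun i => (μ i : ℂ)) * Uᴴ =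
        V * diagonal (fun i => (ν i : ℂ)) * Vᴴ) :
      ∑ j : Fin d, μ (Fin.castLE hd j) ≤ ∑ j : Fin d, ν (Fin.castLE hd j) := by
    have hle := sum_castLE_le_trace_of_unitary hd hμ hU
      (conjTranspose_submatrix_mul_submatrix hV (Fin.castLE_injective hd))
    rw [h, trace_conjTranspose_submatrix_mul_mul_submatrix_diagonal hV (Fin.castLE_injective hd)]
      at hle
    exact_mod_cast hle
  exact le_antisymm (key hU hV hμ h) (key hV hU hν h.symm)

end KyFan

lemma exists_unitary_monotone_diagonal {𝕜 : Type*} [RCLike 𝕜] {m : ℕ}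
    {M : Matrix (Fin m) (Fin m) 𝕜} (hM : M.IsHermitian) :
    ∃ (Q : Matrix (Fin m) (Fin m) 𝕜) (e : Fin m → ℝ), Qᴴ * Q = 1 ∧ Monotone e ∧
      M = Q * diagonal (fun j => (e j : 𝕜)) * Qᴴ := by
  obtain ⟨V, hV, hMV⟩ : ∃ V : Matrix (Fin m) (Fin m) 𝕜, Vᴴ * V = 1 ∧
      M = V * diagonal (fun j => (hM.eigenvalues j : 𝕜)) * Vᴴ :=
    ⟨hM.eigenvectorUnitary, Unitary.coe_star_mul_self _, by
      simpa [Unitary.conjStarAlgAut_apply, Matrix.star_eq_conjTranspose, Function.comp_def]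
        using hM.spectral_theorem⟩
  set σ := Tuple.sort hM.eigenvalues
  have hdiag : diagonal (fun j => (hM.eigenvalues (σ j) : 𝕜)) =
      (diagonal (fun j => (hM.eigenvalues j : 𝕜))).submatrix σ σ :=
    (Matrix.submatrix_diagonal_equiv (fun j => (hM.eigenvalues j : 𝕜)) σ).symm
  refine ⟨V.submatrix id σ, fun j => hM.eigenvalues (σ j),
    conjTranspose_submatrix_mul_submatrix hV σ.injective, Tuple.monotone_sort hM.eigenvalues, ?_⟩
  rw [Matrix.conjTranspose_submatrix, hdiag, ← Matrix.submatrix_mul _ _ id σ σ σ.bijective,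
    ← Matrix.submatrix_mul _ _ id σ id σ.bijective, Matrix.submatrix_id_id]
  exact hMV

section EntrywiseConj

variable {ι κ : Type*}

lemma conjTranspose_map_starRingEnd (M : Matrix ι κ ℂ) :
    (M.map (starRingEnd ℂ))ᴴ = Mᴴ.map (starRingEnd ℂ) :=
  (Matrix.conjTranspose_map _ fun _ => rfl).symm

lemma conjTranspose_map_starRingEnd_mul_self [Fintype ι] [DecidableEq κ] {W : Matrix ι κ ℂ}
    (hW : Wᴴ * W = 1) : (W.map (starRingEnd ℂ))ᴴ * W.map (starRingEnd ℂ) = 1 := by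
  rw [conjTranspose_map_starRingEnd, ← Matrix.map_mul, hW,
    Matrix.map_one _ (map_zero _) (map_one _)]

lemma map_starRingEnd_involutive :
    Function.Involutive (fun M : Matrix ι κ ℂ => M.map (starRingEnd ℂ)) :=
  fun M => by ext; simp

lemma map_starRingEnd_mul_diagonal_mul [Fintype ι] [DecidableEq ι] (U : Matrix ι ι ℂ)
    (v : ι → ℝ) :
    (U * diagonal (fun j => (v j : ℂ)) * Uᴴ).map (starRingEnd ℂ) =
      U.map (starRingEnd ℂ) * diagonal (fun j => (v j : ℂ)) * (U.map (starRingEnd ℂ))ᴴ := by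
  rw [Matrix.map_mul, Matrix.map_mul, conjTranspose_map_starRingEnd,
    Matrix.diagonal_map (map_zero _)]
  simp only [Complex.conj_ofReal]

end EntrywiseConj

lemma exists_real_unitary_monotone_diagonal {m : ℕ} {M : Matrix (Fin m) (Fin m) ℂ}
    (hreal : M.map (starRingEnd ℂ) = M) (hM : M.IsHermitian) :
    ∃ (Q : Matrix (Fin m) (Fin m) ℂ) (e : Fin m → ℝ), Q.map (starRingEnd ℂ) = Q ∧
      Qᴴ * Q = 1 ∧ Monotone e ∧ M = Q * diagonal (fun j => (e j : ℂ)) * Qᴴ := by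
  set B := M.map Complex.re
  have hBM : B.map Complex.ofRealHom = M := by
    ext i j
    exact Complex.conj_eq_iff_re.mp (congr_fun₂ hreal i j)
  have hB : B.IsHermitian := by
    ext i j
    simpa [B] using congrArg Complex.re (congr_fun₂ hM i j)
  have hmapT (N : Matrix (Fin m) (Fin m) ℝ) :
      (N.map Complex.ofRealHom)ᴴ = Nᴴ.map Complex.ofRealHom :=
    (Matrix.conjTranspose_map _ fun x => by simp).symm
  obtain ⟨Q, e, hQ, he, hBQ⟩ := exists_unitary_monotone_diagonal hB
  refine ⟨Q.map Complex.ofRealHom, e, by ext; simp, ?_, he, ?_⟩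
  · rw [hmapT, ← Matrix.map_mul, hQ, Matrix.map_one _ (map_zero _) (map_one _)]
  · rw [← hBM, hBQ, Matrix.map_mul, Matrix.map_mul, hmapT, Matrix.diagonal_map (map_zero _)]
    rfl

lemma exists_real_isometry_trace_eq {m d : ℕ} (hd : d ≤ m) {M : Matrix (Fin m) (Fin m) ℂ}
    (hreal : M.map (starRingEnd ℂ) = M) (hM : M.IsHermitian) {U : Matrix (Fin m) (Fin m) ℂ}
    (hU : Uᴴ * U = 1) {μ : Fin m → ℝ} (hμ : Monotone μ)
    (hMU : M = U * diagonal (fun j => (μ j : ℂ)) * Uᴴ) :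
    ∃ W : Matrix (Fin m) (Fin d) ℂ, W.map (starRingEnd ℂ) = W ∧ Wᴴ * W = 1 ∧
      (Wᴴ * M * W).trace = ((∑ j : Fin d, μ (Fin.castLE hd j) : ℝ) : ℂ) := by
  obtain ⟨Q, e, hQreal, hQ, he, hMQ⟩ := exists_real_unitary_monotone_diagonal hreal hM
  refine ⟨Q.submatrix id (Fin.castLE hd), by rw [← Matrix.submatrix_map, hQreal],
    conjTranspose_submatrix_mul_submatrix hQ (Fin.castLE_injective hd), ?_⟩
  rw [sum_castLE_eq_of_unitary_diagonal_eq hd hU hQ hμ he (hMU.symm.trans hMQ), hMQ,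
    trace_conjTranspose_submatrix_mul_mul_submatrix_diagonal hQ (Fin.castLE_injective hd)]
  push_cast
  rfl

lemma exists_family_apply_neg_eq {ι α : Type*} [LinearOrder ι] [InvolutiveNeg ι] {c : α → α}
    (hc : Function.Involutive c) {P : ι → α → Prop} (hP : ∀ k w, P k w → P (-k) (c w))
    (hex : ∀ k, ∃ w, P k w ∧ (-k = k → c w = w)) :
    ∃ W : ι → α, (∀ k, W (-k) = c (W k)) ∧ ∀ k, P k (W k) := by
  choose w hw hfix using hex
  refine ⟨fun k => if k ≤ -k then w k else c (w (-k)), fun k => ?_, fun k => ?_⟩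
  · rcases lt_trichotomy k (-k) with hlt | heq | hgt
    · simp [hlt.le, hlt.not_ge]
    · simp [← heq, hfix k heq.symm]
    · simp [hgt.not_ge, hgt.le, hc (w (-k))]
  · dsimp only
    split_ifs
    · exact hw k
    · simpa using hP _ _ (hw (-k))

section TProduct

variable {m d p : ℕ}

lemma tProd_tTrans_self_eq_tId_iff (V : Fin p → Matrix (Fin m) (Fin d) ℝ) :
    tProd (tTrans V) V = tId d p ↔ ∀ k, (dft3 V k)ᴴ * dft3 V k = 1 := by
  rw [← dft3_injective.eq_iff, funext_iff]
  simp only [dft3_tProd, dft3_tTrans, dft3_tId]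

lemma tTraceF_tProd_tTrans_tProd (A : Fin p → Matrix (Fin m) (Fin m) ℝ)
    (V : Fin p → Matrix (Fin m) (Fin d) ℝ) :
    tTraceF (tProd (tTrans V) (tProd A V)) =
      1 / (p : ℂ) * ∑ k, ((dft3 V k)ᴴ * dft3 A k * dft3 V k).trace := by
  simp only [tTraceF, dft3_tProd, dft3_tTrans, Matrix.mul_assoc]

lemma exists_conj_symm_isometries (hd : d ≤ m) {A : Fin p → Matrix (Fin m) (Fin m) ℝ}
    (hsym : ∀ k, (dft3 A k).IsHermitian) {μ : Fin p → Fin m → ℝ} (hmono : ∀ k, Monotone (μ k))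
    {U : Fin p → Matrix (Fin m) (Fin m) ℂ} (hU : ∀ k, (U k)ᴴ * U k = 1)
    (hAU : ∀ k, dft3 A k = U k * diagonal (fun j => (μ k j : ℂ)) * (U k)ᴴ) :
    ∃ W : Fin p → Matrix (Fin m) (Fin d) ℂ, (∀ k, W (-k) = (W k).map (starRingEnd ℂ)) ∧
      ∀ k, (W k)ᴴ * W k = 1 ∧
        ((W k)ᴴ * dft3 A k * W k).trace = ((∑ j : Fin d, μ k (Fin.castLE hd j) : ℝ) : ℂ) := by
  refine exists_family_apply_neg_eq map_starRingEnd_involutive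
    (P := fun k (W : Matrix (Fin m) (Fin d) ℂ) => Wᴴ * W = 1 ∧
      (Wᴴ * dft3 A k * W).trace = ((∑ j : Fin d, μ k (Fin.castLE hd j) : ℝ) : ℂ)) ?_ ?_
  · rintro k W ⟨hW, htr⟩
    have hμ : ∑ j : Fin d, μ (-k) (Fin.castLE hd j) = ∑ j : Fin d, μ k (Fin.castLE hd j) := by
      refine sum_castLE_eq_of_unitary_diagonal_eq hd (hU (-k))
        (conjTranspose_map_starRingEnd_mul_self (hU k)) (hmono (-k)) (hmono k) ?_
      rw [← hAU, dft3_neg, hAU, map_starRingEnd_mul_diagonal_mul]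
    refine ⟨conjTranspose_map_starRingEnd_mul_self hW, ?_⟩
    rw [dft3_neg, conjTranspose_map_starRingEnd, ← Matrix.map_mul, ← Matrix.map_mul,
      ← AddMonoidHom.map_trace, htr, hμ, Complex.conj_ofReal]
  · intro k
    by_cases hk : -k = k
    · obtain ⟨W, hWreal, hW, htr⟩ := exists_real_isometry_trace_eq hd
        (by rw [← dft3_neg, hk]) (hsym k) (hU k) (hmono k) (hAU k)
      exact ⟨W, ⟨hW, htr⟩, fun _ => hWreal⟩
    · refine ⟨(U k).submatrix id (Fin.castLE hd), ⟨conjTranspose_submatrix_mul_submatrix (hU k)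
        (Fin.castLE_injective hd), ?_⟩, fun h => absurd h hk⟩
      rw [hAU k, trace_conjTranspose_submatrix_mul_mul_submatrix_diagonal (hU k)
        (Fin.castLE_injective hd)]
      push_cast
      rfl

end TProduct

theorem tensor_trace_min_general (m d p : ℕ) (hd : d ≤ m)
    (A : Fin p → Matrix (Fin m) (Fin m) ℝ)
    (hsym : ∀ i, (dft3 A i).IsHermitian)
    (μ : Fin p → Fin m → ℝ)
    (hmono : ∀ i, Monotone (μ i))
    (hspec : ∀ i, ∃ U : Matrix (Fin m) (Fin m) ℂ, Uᴴ * U = 1 ∧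
        dft3 A i = U * Matrix.diagonal (fun j => (μ i j : ℂ)) * Uᴴ) :
    IsLeast { t : ℝ | ∃ V : Fin p → Matrix (Fin m) (Fin d) ℝ,
        tProd (tTrans V) V = tId d p ∧
        tTraceF (tProd (tTrans V) (tProd A V)) = (t : ℂ) }
      ((1 / (p : ℝ)) * ∑ i : Fin p, ∑ j : Fin d, μ i (Fin.castLE hd j)) := by
  choose U hU hAU using hspec
  constructor
  · obtain ⟨W, hWneg, hW⟩ := exists_conj_symm_isometries hd hsym hmono hU hAU
    obtain ⟨V, hV⟩ := exists_dft3_eq_of_neg_eq_conj W hWneg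
    refine ⟨V, (tProd_tTrans_self_eq_tId_iff V).2 fun k => hV k ▸ (hW k).1, ?_⟩
    simp only [tTraceF_tProd_tTrans_tProd, hV, fun k => (hW k).2]
    push_cast
    rfl
  · rintro t ⟨V, hV, htr⟩
    have hle : (((1 / (p : ℝ)) * ∑ i : Fin p, ∑ j : Fin d, μ i (Fin.castLE hd j) : ℝ) : ℂ) ≤ t := by
      rw [← htr, tTraceF_tProd_tTrans_tProd]
      push_cast
      refine mul_le_mul_of_nonneg_left (Finset.sum_le_sum fun k _ => ?_) (by positivity)
      rw [hAU k]
      exact_mod_cast sum_castLE_le_trace_of_unitary hd (hmono k) (hU k)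
        ((tProd_tTrans_self_eq_tId_iff V).1 hV k)
    exact_mod_cast hle

/-- Tensor trace minimization: for an f-symmetric f-positive-semidefinite tensor A,
    min over V with V^T * V = I of Trace_f(V^T * A * V) = (1/p) Σ_i Σ_{j<d} λ̃_j(Â_i). -/
theorem tensor_trace_min (m d p : ℕ) (hd : d ≤ m)
    (A : Fin p → Matrix (Fin m) (Fin m) ℝ)
    (hsym : ∀ i, (dft3 A i).IsHermitian)
    (hpsd : ∀ i, (dft3 A i).PosSemidef)
    (μ : Fin p → Fin m → ℝ)
    (hmono : ∀ i, Monotone (μ i))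
    (hspec : ∀ i, ∃ U : Matrix (Fin m) (Fin m) ℂ, Uᴴ * U = 1 ∧
        dft3 A i = U * Matrix.diagonal (fun j => (μ i j : ℂ)) * Uᴴ) :
    IsLeast { t : ℝ | ∃ V : Fin p → Matrix (Fin m) (Fin d) ℝ,
        tProd (tTrans V) V = tId d p ∧
        tTraceF (tProd (tTrans V) (tProd A V)) = (t : ℂ) }
      ((1 / (p : ℝ)) * ∑ i : Fin p, ∑ j : Fin d, μ i (Fin.castLE hd j)) :=
  tensor_trace_min_general m d p hd A hsym μ hmono hspec
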